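/- arXiv:1910.04332 — 2 statements merged into one kernel-verified Lean document; each statement's English description precedes it below -/
import Mathlib

section
/- Bias bound for the self-normalized importance sampling estimator: with x₁,…,x_N i.i.d. from Q, w = dP/dQ, f bounded, μ̂ = (1/N)Σᵢ w(xᵢ)f(xᵢ), and μ̃ = Σᵢ w(xᵢ)f(xᵢ) / Σᵢ w(xᵢ), one has |E_{x~P}[f(x)] − E[μ̃]| ≤ ‖f‖∞ · √((d₂(P‖Q) − 1)/N) ≤ ‖f‖∞ · d∞(P‖Q)/√N. -/
open MeasureTheory ProbabilityTheory

theorem sn_aux {X Ω : Type*} [MeasurableSpace X] [MeasurableSpace Ω]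
    (Q : Measure X) [IsProbabilityMeasure Q]
    (w : X → ℝ) (hwm : Measurable w) (hw0 : ∀ x, 0 ≤ w x)
    (dinf : ℝ) (hw : ∀ᵐ x ∂Q, w x ≤ dinf)
    (hEw : ∫ x, w x ∂Q = 1)
    (f : X → ℝ) (hf : Measurable f) (M : ℝ) (hM : 0 ≤ M) (hfb : ∀ x, |f x| ≤ M)
    (μ : Measure Ω) [IsProbabilityMeasure μ] (N : ℕ) (hN : 0 < N)
    (Xs : Fin N → Ω → X) (hXm : ∀ i, Measurable (Xs i))
    (hindep : iIndepFun Xs μ)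
    (hlaw : ∀ i, μ.map (Xs i) = Q) :
    |(∫ x, w x * f x ∂Q) -
        ∫ ω, (∑ i, w (Xs i ω) * f (Xs i ω)) / (∑ i, w (Xs i ω)) ∂μ|
      ≤ M * Real.sqrt (((∫ x, (w x) ^ 2 ∂Q) - 1) / N) ∧
    M * Real.sqrt (((∫ x, (w x) ^ 2 ∂Q) - 1) / N) ≤ M * dinf / Real.sqrt N := by
  classical
  have hNpos : (0:ℝ) < N := by exact_mod_cast hN
  -- basic facts about w under Q
  have hwQb : ∀ᵐ x ∂Q, ‖w x‖ ≤ dinf := hw.mono fun x hx => by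
    rw [Real.norm_eq_abs, abs_of_nonneg (hw0 x)]; exact hx
  have hwQ2 : MemLp w 2 Q := MemLp.of_bound hwm.aestronglyMeasurable dinf hwQb
  have hwQ1 : Integrable w Q := hwQ2.integrable one_le_two
  have hd1 : (1:ℝ) ≤ dinf := by
    calc (1:ℝ) = ∫ x, w x ∂Q := hEw.symm
      _ ≤ ∫ _x, dinf ∂Q := integral_mono_ae hwQ1 (integrable_const dinf) hw
      _ = dinf := by simp
  have hd0 : (0:ℝ) ≤ dinf := by linarith
  set d2 : ℝ := ∫ x, (w x) ^ 2 ∂Q with hd2_def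
  have hd2le : d2 ≤ dinf := by
    calc d2 ≤ ∫ x, dinf * w x ∂Q :=
          integral_mono_ae hwQ2.integrable_sq (hwQ1.const_mul dinf)
            (hw.mono fun x hx => by dsimp only; nlinarith [hw0 x])
      _ = dinf := by rw [integral_const_mul, hEw, mul_one]
  -- the H random variables
  set H : Fin N → Ω → ℝ := fun i ω => w (Xs i ω) with hH_def
  have hHm : ∀ i, Measurable (H i) := fun i => hwm.comp (hXm i)
  have hae : ∀ i (g : X → ℝ), Measurable g → ∫ ω, g (Xs i ω) ∂μ = ∫ x, g x ∂Q := by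
    intro i g hg
    rw [← hlaw i, integral_map (hXm i).aemeasurable hg.aestronglyMeasurable]
  have hHb : ∀ i, ∀ᵐ ω ∂μ, ‖H i ω‖ ≤ dinf := by
    intro i
    have h1 : ∀ᵐ x ∂(μ.map (Xs i)), ‖w x‖ ≤ dinf := by rw [hlaw i]; exact hwQb
    exact (ae_map_iff (hXm i).aemeasurable
      (measurableSet_le hwm.norm measurable_const)).mp h1
  have hH2 : ∀ i, MemLp (H i) 2 μ := fun i =>
    MemLp.of_bound (hHm i).aestronglyMeasurable dinf (hHb i)
  have hEH : ∀ i, ∫ ω, H i ω ∂μ = 1 := fun i => (hae i w hwm).trans hEw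
  have hVarH : ∀ i, variance (H i) μ = d2 - 1 := by
    intro i
    rw [variance_eq_sub (hH2 i)]
    have h2 : (∫ ω, (H i ω) ^ 2 ∂μ) = d2 := (hae i (fun x => (w x) ^ 2) (hwm.pow_const 2))
    have h1 : (∫ ω, H i ω ∂μ) = 1 := hEH i
    simp only [Pi.pow_apply]
    rw [h1, h2]; ring
  -- the sum S
  set S : Ω → ℝ := fun ω => ∑ i, H i ω with hS_def
  have hSsum : S = ∑ i, H i := by funext ω; simp [hS_def]
  have hSm : Measurable S := by
    apply Finset.measurable_sum
    intro i _; exact hHm i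
  have hS2 : MemLp S 2 μ := by
    rw [hSsum]; exact memLp_finset_sum' _ (fun i _ => hH2 i)
  have hHint : ∀ i, Integrable (H i) μ := fun i => (hH2 i).integrable one_le_two
  have hES : ∫ ω, S ω ∂μ = N := by
    rw [hS_def, integral_finset_sum _ (fun i _ => hHint i)]
    simp [hEH]
  have hVarS : variance S μ = N * (d2 - 1) := by
    rw [hSsum, IndepFun.variance_sum (fun i _ => hH2 i)
      (fun i _ j _ hij => (hindep.indepFun hij).comp hwm hwm)]
    simp [hVarH, Finset.sum_const]; ring
  have hS0 : ∀ ω, 0 ≤ S ω := fun ω => Finset.sum_nonneg fun i _ => hw0 _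
  -- W and Y
  set Wn : Ω → ℝ := fun ω => S ω / N with hW_def
  have hWeq : Wn = (N:ℝ)⁻¹ • S := by funext ω; simp [hW_def, div_eq_inv_mul]
  have hW2 : MemLp Wn 2 μ := by rw [hWeq]; exact hS2.const_smul _
  have hEW : ∫ ω, Wn ω ∂μ = 1 := by
    rw [hW_def]
    rw [integral_div, hES, div_self hNpos.ne']
  have hVarW : variance Wn μ = (d2 - 1) / N := by
    rw [hWeq, variance_smul, hVarS]
    field_simp
  set Y : Ω → ℝ := fun ω => Wn ω - 1 with hY_def
  have hY2 : MemLp Y 2 μ := hW2.sub (memLp_const 1)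
  have hYint : Integrable Y μ := hY2.integrable one_le_two
  have hIntY2 : ∫ ω, (Y ω) ^ 2 ∂μ = (d2 - 1) / N := by
    have hve := variance_eq_integral hW2.aestronglyMeasurable.aemeasurable
    rw [hEW] at hve
    rw [← hVarW, hve]
  -- Cauchy-Schwarz : ∫|Y| ≤ sqrt ((d2-1)/N)
  have hYa2 : MemLp (fun ω => |Y ω|) 2 μ := by
    have := hY2.norm
    simpa [Real.norm_eq_abs] using this
  have hYaint : Integrable (fun ω => |Y ω|) μ := hYa2.integrable one_le_two
  have hCS : ∫ ω, |Y ω| ∂μ ≤ Real.sqrt ((d2 - 1) / N) := by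
    have hv := variance_nonneg (fun ω => |Y ω|) μ
    rw [variance_eq_sub hYa2] at hv
    have he : (∫ ω, ((fun ω => |Y ω|) ^ 2) ω ∂μ) = (d2 - 1) / N := by
      rw [← hIntY2]
      apply integral_congr_ae; filter_upwards with ω
      simp [sq_abs]
    rw [he] at hv
    have hnn : 0 ≤ ∫ ω, |Y ω| ∂μ := integral_nonneg fun ω => abs_nonneg _
    have h2 : (∫ ω, |Y ω| ∂μ) ^ 2 ≤ (d2 - 1) / N := by linarith
    calc ∫ ω, |Y ω| ∂μ = Real.sqrt ((∫ ω, |Y ω| ∂μ) ^ 2) := (Real.sqrt_sq hnn).symm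
      _ ≤ Real.sqrt ((d2 - 1) / N) := Real.sqrt_le_sqrt h2
  -- the estimator T
  set G : Ω → ℝ := fun ω => ∑ i, H i ω * f (Xs i ω) with hG_def
  set T : Ω → ℝ := fun ω => G ω / S ω with hT_def
  have hGm : Measurable G := by
    apply Finset.measurable_sum
    intro i _; exact (hHm i).mul (hf.comp (hXm i))
  have hTm : Measurable T := hGm.div hSm
  have hTb : ∀ ω, |T ω| ≤ M := by
    intro ω
    rcases eq_or_lt_of_le (hS0 ω) with h | h
    · simp [hT_def, ← h, hM]
    · rw [hT_def]
      rw [abs_div, abs_of_pos h, div_le_iff₀ h]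
      calc |G ω| ≤ ∑ i, |H i ω * f (Xs i ω)| := Finset.abs_sum_le_sum_abs _ _
        _ ≤ ∑ i, H i ω * M := by
            apply Finset.sum_le_sum
            intro i _
            rw [abs_mul, abs_of_nonneg (hw0 _)]
            exact mul_le_mul_of_nonneg_left (hfb _) (hw0 _)
        _ = M * S ω := by rw [hS_def, ← Finset.sum_mul]; ring
  have hkey : ∀ ω, G ω / N - T ω = T ω * Y ω := by
    intro ω
    rcases eq_or_lt_of_le (hS0 ω) with h | h
    · have hz : ∀ i ∈ Finset.univ, H i ω = 0 :=
        (Finset.sum_eq_zero_iff_of_nonneg (fun i _ => hw0 _)).mp h.symm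
      have hG0 : G ω = 0 := Finset.sum_eq_zero fun i hi => by rw [hz i hi, zero_mul]
      simp [hT_def, hG0]
    · have hTS : T ω * S ω = G ω := div_mul_cancel₀ _ h.ne'
      have : Y ω = S ω / N - 1 := rfl
      rw [this]
      calc G ω / N - T ω = (T ω * S ω) / N - T ω := by rw [hTS]
        _ = T ω * (S ω / N - 1) := by ring
  -- integrals
  have hGint_i : ∀ i, Integrable (fun ω => H i ω * f (Xs i ω)) μ := by
    intro i
    have h := Integrable.bdd_mul (hHint i) ((hf.comp (hXm i)).aestronglyMeasurable)
      (Filter.Eventually.of_forall fun ω => by simpa [Real.norm_eq_abs] using hfb (Xs i ω))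
    simpa [mul_comm] using h
  have hGint : Integrable G μ := by
    rw [hG_def]; exact integrable_finset_sum _ (fun i _ => hGint_i i)
  have hEG : ∫ ω, G ω ∂μ = N * ∫ x, w x * f x ∂Q := by
    rw [hG_def, integral_finset_sum _ (fun i _ => hGint_i i)]
    have hone : ∀ i : Fin N, ∫ ω, H i ω * f (Xs i ω) ∂μ = ∫ x, w x * f x ∂Q := fun i =>
      hae i (fun x => w x * f x) (hwm.mul hf)
    simp [hone]
  have hTbd : ∀ ω, ‖T ω‖ ≤ M := fun ω => by
    simpa [Real.norm_eq_abs] using hTb ω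
  have hTint : Integrable T μ :=
    memLp_one_iff_integrable.mp
      (MemLp.of_bound hTm.aestronglyMeasurable M (Filter.Eventually.of_forall hTbd))
  have hTYint : Integrable (fun ω => T ω * Y ω) μ :=
    Integrable.bdd_mul hYint hTm.aestronglyMeasurable (Filter.Eventually.of_forall hTbd)
  have hsplit : (∫ x, w x * f x ∂Q) - ∫ ω, T ω ∂μ = ∫ ω, T ω * Y ω ∂μ := by
    have h1 : ∫ ω, G ω / N ∂μ = ∫ x, w x * f x ∂Q := by
      rw [integral_div, hEG]
      field_simp
    rw [← h1, ← integral_sub (hGint.div_const _) hTint]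
    exact integral_congr_ae (Filter.Eventually.of_forall fun ω => hkey ω)
  have hTORIG : (∫ ω, (∑ i, w (Xs i ω) * f (Xs i ω)) / (∑ i, w (Xs i ω)) ∂μ)
      = ∫ ω, T ω ∂μ := rfl
  rw [hTORIG]
  constructor
  · rw [hsplit]
    calc |∫ ω, T ω * Y ω ∂μ| ≤ ∫ ω, |T ω * Y ω| ∂μ := by
          simpa only [Real.norm_eq_abs] using norm_integral_le_integral_norm (μ := μ) (fun ω => T ω * Y ω)
      _ ≤ ∫ ω, M * |Y ω| ∂μ := by
          refine integral_mono hTYint.abs (hYaint.const_mul M) fun ω => ?_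
          rw [abs_mul]
          exact mul_le_mul_of_nonneg_right (hTb ω) (abs_nonneg _)
      _ = M * ∫ ω, |Y ω| ∂μ := integral_const_mul M _
      _ ≤ M * Real.sqrt ((d2 - 1) / N) := mul_le_mul_of_nonneg_left hCS hM
  · have h1 : (d2 - 1) / N ≤ dinf ^ 2 / N := by
      have h2 : d2 - 1 ≤ dinf ^ 2 := by nlinarith
      gcongr
    calc M * Real.sqrt ((d2 - 1) / N) ≤ M * Real.sqrt (dinf ^ 2 / N) :=
          mul_le_mul_of_nonneg_left (Real.sqrt_le_sqrt h1) hM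
      _ = M * dinf / Real.sqrt N := by
          rw [Real.sqrt_div (sq_nonneg dinf), Real.sqrt_sq hd0]
          ring

/-- Bias bound for the self-normalized importance sampling estimator:
`|E_P[f] - E[μ̃]| ≤ ‖f‖∞ √((d₂ - 1)/N) ≤ ‖f‖∞ d∞ / √N`. -/
theorem sn_estimator_bias_bound {X Ω : Type*} [MeasurableSpace X] [MeasurableSpace Ω]
    (P Q : Measure X) [IsProbabilityMeasure P] [IsProbabilityMeasure Q]
    (hPQ : P ≪ Q) (dinf : ℝ)
    (hw : ∀ᵐ x ∂Q, (P.rnDeriv Q x).toReal ≤ dinf)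
    (f : X → ℝ) (hf : Measurable f) (M : ℝ) (hM : 0 ≤ M) (hfb : ∀ x, |f x| ≤ M)
    (μ : Measure Ω) [IsProbabilityMeasure μ] (N : ℕ) (hN : 0 < N)
    (Xs : Fin N → Ω → X) (hXm : ∀ i, Measurable (Xs i))
    (hindep : iIndepFun Xs μ)
    (hlaw : ∀ i, μ.map (Xs i) = Q) :
    |(∫ x, f x ∂P) -
        ∫ ω, (∑ i, (P.rnDeriv Q (Xs i ω)).toReal * f (Xs i ω)) /
          (∑ i, (P.rnDeriv Q (Xs i ω)).toReal) ∂μ|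
      ≤ M * Real.sqrt (((∫ x, ((P.rnDeriv Q x).toReal) ^ 2 ∂Q) - 1) / N) ∧
    M * Real.sqrt (((∫ x, ((P.rnDeriv Q x).toReal) ^ 2 ∂Q) - 1) / N)
      ≤ M * dinf / Real.sqrt N := by
  have hEw : ∫ x, (P.rnDeriv Q x).toReal ∂Q = 1 := by
    rw [Measure.integral_toReal_rnDeriv hPQ]
    simp
  have hEP : ∫ x, (P.rnDeriv Q x).toReal * f x ∂Q = ∫ x, f x ∂P := by
    rw [← MeasureTheory.integral_rnDeriv_smul hPQ (f := f)]
    simp [smul_eq_mul]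
  have h := sn_aux Q (fun x => (P.rnDeriv Q x).toReal)
    (Measure.measurable_rnDeriv P Q).ennreal_toReal
    (fun x => ENNReal.toReal_nonneg) dinf hw hEw f hf M hM hfb μ N hN Xs hXm hindep hlaw
  rw [hEP] at h
  exact h
end

section
/- Total loss bound for greedy policies (Lemma 3): if the per-step loss satisfies L_t(b) ≤ 2γβ + γ·E[L_{t+1}(b') | b] for all t < D−1 and L_{D−1}(b) ≤ β, with γ ∈ [0,1) and β ≥ 0, then L_0(b) ≤ Σ_{d=1}^{D−1} 2βγ^d + γ^{D−1}β ≤ 3β/(1−γ). -/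
lemma sum_step (β γ : ℝ) (k : ℕ) :
    (∑ d ∈ Finset.Ico 1 (k+2), 2 * β * γ ^ d)
      = 2 * γ * β + γ * (∑ d ∈ Finset.Ico 1 (k+1), 2 * β * γ ^ d) := by
  rw [Finset.sum_Ico_eq_sum_range, Finset.sum_Ico_eq_sum_range]
  simp only [Nat.add_sub_cancel, Nat.succ_sub_one]
  rw [Finset.sum_range_succ', Finset.mul_sum]
  have h : ∀ i, 2 * β * γ ^ (1 + (i + 1)) = γ * (2 * β * γ ^ (1 + i)) := fun i => by ring
  simp only [h]
  ring

/-- Total loss bound for greedy policies (Lemma 3): if the per-step loss satisfies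
`L_t(b) ≤ 2γβ + γ E[L_{t+1}(b')|b]` for `t < D-1` and `L_{D-1}(b) ≤ β`, then
`L_0(b) ≤ ∑_{d=1}^{D-1} 2βγ^d + γ^{D-1}β ≤ 3β/(1-γ)`.
`Ex f b` denotes a conditional expectation of `f` over next beliefs given `b`. -/
theorem greedy_total_loss_bound {B : Type*} (D : ℕ) (hD : 1 ≤ D)
    (γ β : ℝ) (hγ0 : 0 ≤ γ) (hγ1 : γ < 1) (hβ : 0 ≤ β)
    (Ex : (B → ℝ) → B → ℝ)
    (hEbound : ∀ (f : B → ℝ) (c : ℝ), (∀ b, f b ≤ c) → ∀ b, Ex f b ≤ c)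
    (L : ℕ → B → ℝ)
    (hrec : ∀ t, t < D - 1 → ∀ b, L t b ≤ 2 * γ * β + γ * Ex (L (t + 1)) b)
    (hlast : ∀ b, L (D - 1) b ≤ β) :
    ∀ b, L 0 b ≤ (∑ d ∈ Finset.Ico 1 D, 2 * β * γ ^ d) + γ ^ (D - 1) * β ∧
      (∑ d ∈ Finset.Ico 1 D, 2 * β * γ ^ d) + γ ^ (D - 1) * β ≤ 3 * β / (1 - γ) := by
  have h1γ : (0:ℝ) < 1 - γ := by linarith
  have key : ∀ k, k ≤ D - 1 → ∀ b,
      L (D - 1 - k) b ≤ (∑ d ∈ Finset.Ico 1 (k+1), 2 * β * γ ^ d) + γ ^ k * β := by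
    intro k
    induction k with
    | zero => intro _ b; simpa using hlast b
    | succ k ih =>
      intro hk b
      have hk' : k ≤ D - 1 := Nat.le_of_succ_le hk
      have ht : D - 1 - (k+1) < D - 1 := by omega
      have ht1 : D - 1 - (k+1) + 1 = D - 1 - k := by omega
      have hE : Ex (L (D - 1 - (k+1) + 1)) b ≤
          (∑ d ∈ Finset.Ico 1 (k+1), 2 * β * γ ^ d) + γ ^ k * β := by
        apply hEbound
        rw [ht1]; exact ih hk'
      have hr := hrec _ ht b
      have : L (D - 1 - (k+1)) b ≤ 2 * γ * β +
          γ * ((∑ d ∈ Finset.Ico 1 (k+1), 2 * β * γ ^ d) + γ ^ k * β) := by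
        refine hr.trans ?_
        have := mul_le_mul_of_nonneg_left hE hγ0
        linarith
      calc L (D - 1 - (k+1)) b ≤ 2 * γ * β +
          γ * ((∑ d ∈ Finset.Ico 1 (k+1), 2 * β * γ ^ d) + γ ^ k * β) := this
        _ = (∑ d ∈ Finset.Ico 1 (k+2), 2 * β * γ ^ d) + γ ^ (k+1) * β := by
            rw [sum_step]; ring
  intro b
  constructor
  · have h := key (D - 1) le_rfl b
    have hD1 : D - 1 - (D - 1) = 0 := by omega
    have hD2 : D - 1 + 1 = D := by omega
    rw [hD1, hD2] at h
    exact h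
  · have hsum : (∑ d ∈ Finset.Ico 1 D, 2 * β * γ ^ d) ≤ 2 * β / (1 - γ) := by
      have h1 : (∑ d ∈ Finset.Ico 1 D, 2 * β * γ ^ d)
          = 2 * β * ∑ d ∈ Finset.Ico 1 D, γ ^ d := by rw [Finset.mul_sum]
      have h2 : (∑ d ∈ Finset.Ico 1 D, γ ^ d) ≤ ∑ d ∈ Finset.range D, γ ^ d := by
        apply Finset.sum_le_sum_of_subset_of_nonneg
        · intro x hx; simp at hx ⊢; omega
        · intro i _ _; positivity
      have h3 : (∑ d ∈ Finset.range D, γ ^ d) ≤ 1 / (1 - γ) := by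
        rw [geom_sum_eq hγ1.ne]
        have heq : (γ ^ D - 1) / (γ - 1) = (1 - γ ^ D) / (1 - γ) := by
          rw [div_eq_div_iff (by linarith : γ - 1 ≠ 0) h1γ.ne']; ring
        rw [heq]
        gcongr
        nlinarith [pow_nonneg hγ0 D]
      rw [h1]
      calc 2 * β * ∑ d ∈ Finset.Ico 1 D, γ ^ d ≤ 2 * β * (1 / (1 - γ)) := by
            apply mul_le_mul_of_nonneg_left (h2.trans h3) (by positivity)
        _ = 2 * β / (1 - γ) := by ring
    have hpow : γ ^ (D - 1) * β ≤ β / (1 - γ) := by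
      have h1 : γ ^ (D - 1) ≤ 1 := pow_le_one₀ hγ0 hγ1.le
      have h2 : β ≤ β / (1 - γ) := by
        rw [le_div_iff₀ h1γ]; nlinarith
      calc γ ^ (D - 1) * β ≤ 1 * β := by nlinarith [pow_nonneg hγ0 (D-1)]
        _ = β := one_mul β
        _ ≤ β / (1 - γ) := h2
    have : 2 * β / (1 - γ) + β / (1 - γ) = 3 * β / (1 - γ) := by ring
    linarith
end
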